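/- Let G be an LWF chain graph and T ∈ V. Then Mb(T) is the unique inclusion-minimal set S ⊆ V∖{T} such that T is c-separated from every vertex of V∖({T}∪S) given S; that is, Mb(T) has this separating property, and every set S ⊆ V∖{T} with this property satisfies Mb(T) ⊆ S. -/

import Mathlib

/- Formalization of LWF chain graphs, routes, sections, c-separation,
   minimal complexes, Markov blankets, moral graphs, and ancestral sets. -/

namespace LWF

/-- An LWF chain graph: a mixed graph with directed edges `dir` and (symmetric)
undirected edges `undir`, no loops, no pair of vertices joined by more than one
edge, and no partially directed cycles. -/
structure ChainGraph (V : Type*) where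
  dir : V → V → Prop
  undir : V → V → Prop
  undir_symm : ∀ u v, undir u v → undir v u
  dir_irrefl : ∀ v, ¬ dir v v
  undir_irrefl : ∀ v, ¬ undir v v
  dir_asymm : ∀ u v, dir u v → ¬ dir v u
  dir_not_undir : ∀ u v, dir u v → ¬ undir u v
  /-- No partially directed cycle: there is no sequence `ρ 0, …, ρ n` (`n ≥ 2`)
  with `ρ n = ρ 0`, the vertices `ρ 0, …, ρ (n-1)` distinct, every consecutive
  pair joined by `dir` or `undir` (in the forward direction), and at least one
  forward directed edge on it. -/
  no_partially_directed_cycle :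
    ∀ (n : ℕ) (ρ : ℕ → V), 2 ≤ n → ρ n = ρ 0 →
      (∀ i j, i < j → j < n → ρ i ≠ ρ j) →
      (∀ i, i < n → dir (ρ i) (ρ (i+1)) ∨ undir (ρ i) (ρ (i+1))) →
      ¬ ∃ i, i < n ∧ dir (ρ i) (ρ (i+1))

namespace ChainGraph

variable {V : Type*}

/-- Two vertices are adjacent if they are joined by a directed or an undirected edge. -/
def Adj (G : ChainGraph V) (u v : V) : Prop := G.dir u v ∨ G.dir v u ∨ G.undir u v

/-- A partially directed path from `u` to `w`: a sequence of distinct vertices,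
each consecutive pair joined by a forward directed or an undirected edge, with
at least one directed edge on it. -/
def PDPath (G : ChainGraph V) (u w : V) : Prop :=
  ∃ (n : ℕ) (ρ : ℕ → V), 1 ≤ n ∧ ρ 0 = u ∧ ρ n = w ∧
    (∀ i j, i ≤ n → j ≤ n → i ≠ j → ρ i ≠ ρ j) ∧
    (∀ i, i < n → G.dir (ρ i) (ρ (i+1)) ∨ G.undir (ρ i) (ρ (i+1))) ∧
    (∃ i, i < n ∧ G.dir (ρ i) (ρ (i+1)))

/-- `an(Z)`: the set of vertices having a partially directed path to some vertex of `Z`. -/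
def anc (G : ChainGraph V) (Z : Set V) : Set V := {x | ∃ z ∈ Z, G.PDPath x z}

/-- Parents of `v`. -/
def pa (G : ChainGraph V) (v : V) : Set V := {u | G.dir u v}

/-- Children of `v`. -/
def ch (G : ChainGraph V) (v : V) : Set V := {u | G.dir v u}

/-- Neighbours of `v`. -/
def nb (G : ChainGraph V) (v : V) : Set V := {u | G.undir u v}

/-- A minimal complex `a → ρ 1 − ⋯ − ρ n ← b` (with `ρ 0 = a`, `ρ (n+1) = b`,
`n ≥ 1`): all vertices distinct, the indicated edges present, and it is an
induced subgraph, i.e. the only adjacencies among its vertices are between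
consecutive ones (in particular `a` and `b` are non-adjacent). -/
def IsMinimalComplex (G : ChainGraph V) (a b : V) (n : ℕ) (ρ : ℕ → V) : Prop :=
  1 ≤ n ∧ ρ 0 = a ∧ ρ (n+1) = b ∧
  (∀ i j, i ≤ n+1 → j ≤ n+1 → i ≠ j → ρ i ≠ ρ j) ∧
  G.dir a (ρ 1) ∧ G.dir b (ρ n) ∧
  (∀ i, 1 ≤ i → i < n → G.undir (ρ i) (ρ (i+1))) ∧
  (∀ i j, i ≤ n+1 → j ≤ n+1 → G.Adj (ρ i) (ρ j) → j = i+1 ∨ i = j+1)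

/-- Complex-spouses of `a`. -/
def csp (G : ChainGraph V) (a : V) : Set V := {b | ∃ n ρ, G.IsMinimalComplex a b n ρ}

/-- The Markov blanket of `T`: parents, neighbours, children and complex-spouses of `T`. -/
def mb (G : ChainGraph V) (T : V) : Set V := G.pa T ∪ G.nb T ∪ G.ch T ∪ G.csp T

/-- A route in `G`: a sequence of `len + 1` vertices `vtx 0, …, vtx len`
(hence nonempty), each consecutive pair joined by an edge of `G`. -/
structure Route (G : ChainGraph V) where
  len : ℕ
  vtx : ℕ → V
  link : ∀ i, i < len → G.Adj (vtx i) (vtx (i+1))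

/-- The positions `a, …, b` of the route form a section: all steps inside are
undirected edges, and the run is maximal on both sides. -/
def Route.IsSection {G : ChainGraph V} (ω : Route G) (a b : ℕ) : Prop :=
  a ≤ b ∧ b ≤ ω.len ∧
  (∀ k, a ≤ k → k < b → G.undir (ω.vtx k) (ω.vtx (k+1))) ∧
  (0 < a → ¬ G.undir (ω.vtx (a-1)) (ω.vtx a)) ∧
  (b < ω.len → ¬ G.undir (ω.vtx b) (ω.vtx (b+1)))

/-- A collider section: a section which the route enters by an arrowhead at both
ends, i.e. `vtx (a-1) → vtx a − ⋯ − vtx b ← vtx (b+1)` occurs on the route. -/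
def Route.IsColliderSection {G : ChainGraph V} (ω : Route G) (a b : ℕ) : Prop :=
  ω.IsSection a b ∧ 0 < a ∧ b < ω.len ∧
  G.dir (ω.vtx (a-1)) (ω.vtx a) ∧ G.dir (ω.vtx (b+1)) (ω.vtx b)

/-- A route is active with respect to `Z` if every collider section of it
contains a vertex of `Z ∪ an(Z)` and no vertex of any non-collider section is in `Z`. -/
def Route.Active {G : ChainGraph V} (ω : Route G) (Z : Set V) : Prop :=
  (∀ a b, ω.IsColliderSection a b → ∃ k, a ≤ k ∧ k ≤ b ∧ ω.vtx k ∈ Z ∪ G.anc Z) ∧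
  (∀ a b, ω.IsSection a b → ¬ ω.IsColliderSection a b →
    ∀ k, a ≤ k → k ≤ b → ω.vtx k ∉ Z)

/-- A route is intercepted (blocked) by `Z` if it is not active with respect to `Z`. -/
def Route.Intercepted {G : ChainGraph V} (ω : Route G) (Z : Set V) : Prop :=
  ¬ ω.Active Z

/-- `X` and `Y` are c-separated given `Z`: every route between a vertex of `X`
and a vertex of `Y` is intercepted by `Z`. -/
def CSep (G : ChainGraph V) (X Y Z : Set V) : Prop :=
  ∀ ω : Route G,
    ((ω.vtx 0 ∈ X ∧ ω.vtx ω.len ∈ Y) ∨ (ω.vtx 0 ∈ Y ∧ ω.vtx ω.len ∈ X)) →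
    ω.Intercepted Z

/-- Moral graph adjacency: distinct `u`, `v` are adjacent in `G^m` iff they are
adjacent in `G` or are complex-spouses. -/
def MoralAdj (G : ChainGraph V) (u v : V) : Prop :=
  u ≠ v ∧ (G.dir u v ∨ G.dir v u ∨ G.undir u v ∨ u ∈ G.csp v ∨ v ∈ G.csp u)

/-- A set `A` is ancestral if it contains the boundary (parents and neighbours)
of each of its elements. -/
def Ancestral (G : ChainGraph V) (A : Set V) : Prop :=
  ∀ a ∈ A, ∀ u, (G.dir u a ∨ G.undir u a) → u ∈ A

/-- `An(A)`: the smallest ancestral set containing `A`. -/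
def An (G : ChainGraph V) (A : Set V) : Set V :=
  ⋂₀ {B : Set V | A ⊆ B ∧ G.Ancestral B}

/-- A minimal complex of the induced subgraph `G_A`: a minimal complex of `G`
all of whose vertices lie in `A`. -/
def IsMinimalComplexIn (G : ChainGraph V) (A : Set V) (a b : V) (n : ℕ) (ρ : ℕ → V) : Prop :=
  G.IsMinimalComplex a b n ρ ∧ ∀ i, i ≤ n+1 → ρ i ∈ A

/-- Adjacency in the moral graph `(G_A)^m` of the induced subgraph of `G` on `A`:
distinct `u, v ∈ A` joined by an edge of `G`, or complex-spouses in `G_A`. -/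
def MoralAdjIn (G : ChainGraph V) (A : Set V) (u v : V) : Prop :=
  u ∈ A ∧ v ∈ A ∧ u ≠ v ∧
    (G.dir u v ∨ G.dir v u ∨ G.undir u v ∨
      (∃ n ρ, G.IsMinimalComplexIn A u v n ρ) ∨ (∃ n ρ, G.IsMinimalComplexIn A v u n ρ))

end ChainGraph

/-- A path from `u` to `v` in an undirected graph with adjacency relation `R`:
a sequence of `n + 1 ≥ 2` distinct vertices `ρ 0 = u, …, ρ n = v` with each
consecutive pair adjacent. -/
def UPath {V : Type*} (R : V → V → Prop) (u v : V) (n : ℕ) (ρ : ℕ → V) : Prop :=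
  1 ≤ n ∧ ρ 0 = u ∧ ρ n = v ∧
  (∀ i j, i ≤ n → j ≤ n → i ≠ j → ρ i ≠ ρ j) ∧
  (∀ i, i < n → R (ρ i) (ρ (i+1)))

end LWF

/-
Separation: follow a route from `T` that is active given `Mb(T)`. Its first edge cannot be
`T − x` or `T ← x`, for then `x ∈ Mb(T)` would lie on a non-collider section; so it is
`T → x`, and the section of `x` is a collider closed by an edge `y → ·`. Then `y` starts a
non-collider section, so `y ∉ Mb(T)`: either `y = T` and we start again from there, or `y`
is not adjacent to `T` and `T → x − ⋯ − · ← y` is a walk whose shortest version is a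
minimal complex (a chord would either shorten it or close a partially directed cycle),
making `y` a complex-spouse of `T`.

Minimality: every `m ∈ Mb(T)` is joined to `T` by an edge or by a minimal complex. Seen as
a route, the latter is active given any `S` avoiding `T` and `m` but containing the child
of `T` on it, and that child lies in every separating `S` because it is adjacent to `T`.
-/

namespace LWF

theorem exists_seq_of_reflTransGen {α : Type*} {R : α → α → Prop} {a b : α}
    (h : Relation.ReflTransGen R a b) :
    ∃ (n : ℕ) (ρ : ℕ → α), ρ 0 = a ∧ ρ n = b ∧ ∀ i < n, R (ρ i) (ρ (i + 1)) := by
  induction h using Relation.ReflTransGen.head_induction_on with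
  | refl => exact ⟨0, fun _ => b, rfl, rfl, fun _ h => absurd h (Nat.not_lt_zero _)⟩
  | head hac _ ih =>
    obtain ⟨n, ρ, h0, hn, hstep⟩ := ih
    refine ⟨n + 1, fun | 0 => _ | k + 1 => ρ k, rfl, hn, ?_⟩
    rintro (_ | i) hi
    · simpa [h0] using hac
    · exact hstep i (by omega)

def splice {α : Type*} (ρ : ℕ → α) (i c : ℕ) : ℕ → α :=
  fun k => if k ≤ i then ρ k else ρ (k + c)

section splice

variable {α : Type*} {ρ : ℕ → α} {i c k : ℕ}

theorem splice_of_le (h : k ≤ i) : splice ρ i c k = ρ k := if_pos h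

theorem splice_of_lt (h : i < k) : splice ρ i c k = ρ (k + c) := if_neg (not_le.2 h)

theorem rel_splice {R : α → α → Prop} (hlt : k < i → R (ρ k) (ρ (k + 1)))
    (heq : k = i → R (ρ i) (ρ (i + c + 1)))
    (hgt : i < k → R (ρ (k + c)) (ρ (k + c + 1))) :
    R (splice ρ i c k) (splice ρ i c (k + 1)) := by
  rcases lt_trichotomy k i with h | rfl | h
  · rw [splice_of_le h.le, splice_of_le h]
    exact hlt h
  · rw [splice_of_le le_rfl, splice_of_lt (Nat.lt_add_one k), Nat.add_right_comm]
    exact heq rfl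
  · rw [splice_of_lt h, splice_of_lt (by omega), Nat.add_right_comm]
    exact hgt h

end splice

namespace ChainGraph

variable {V : Type*} (G : ChainGraph V)

theorem adj_symm {u v : V} (h : G.Adj u v) : G.Adj v u := by
  rcases h with h | h | h
  exacts [Or.inr (Or.inl h), Or.inl h, Or.inr (Or.inr (G.undir_symm _ _ h))]

theorem adj_irrefl (v : V) : ¬ G.Adj v v := by
  rintro (h | h | h)
  exacts [G.dir_irrefl v h, G.dir_irrefl v h, G.undir_irrefl v h]

theorem mem_mb_iff {T u : V} : u ∈ G.mb T ↔ G.Adj T u ∨ u ∈ G.csp T := by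
  constructor
  · rintro (((h | h) | h) | h)
    exacts [Or.inl (Or.inr (Or.inl h)), Or.inl (Or.inr (Or.inr (G.undir_symm _ _ h))),
      Or.inl (Or.inl h), Or.inr h]
  · rintro ((h | h | h) | h)
    exacts [Or.inl (Or.inr h), Or.inl (Or.inl (Or.inl h)),
      Or.inl (Or.inl (Or.inr (G.undir_symm _ _ h))), Or.inr h]

def PDEdge (u v : V) : Prop := G.dir u v ∨ G.undir u v

theorem reflTransGen_undir_symm {u v : V} (h : Relation.ReflTransGen G.undir u v) :
    Relation.ReflTransGen G.undir v u := by
  induction h with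
  | refl => rfl
  | tail _ hbc ih => exact ih.head (G.undir_symm _ _ hbc)

theorem not_dir_of_closed_walk : ∀ (n : ℕ) (ρ : ℕ → V), 0 < n → ρ n = ρ 0 →
    (∀ i < n, G.PDEdge (ρ i) (ρ (i + 1))) → ¬ G.dir (ρ 0) (ρ 1) := by
  intro n
  induction n using Nat.strong_induction_on with
  | _ n ih =>
  intro ρ hn hclosed hstep hdir
  by_cases hinj : ∀ i j, i < j → j < n → ρ i ≠ ρ j
  · obtain rfl | hn2 := eq_or_lt_of_le (Nat.succ_le_of_lt hn)
    · exact G.dir_irrefl _ (hclosed ▸ hdir)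
    · exact G.no_partially_directed_cycle n ρ hn2 hclosed hinj hstep ⟨0, hn, hdir⟩
  push Not at hinj
  obtain ⟨i, j, hij, hjn, hρ⟩ := hinj
  rcases Nat.eq_zero_or_pos i with rfl | hi
  · exact ih j hjn ρ (by omega) hρ.symm (fun k hk => hstep k (by omega)) hdir
  -- otherwise cut out the loop `ρ i, …, ρ j`, which keeps the first edge
  refine ih (n - (j - i)) (by omega) (splice ρ i (j - i)) (by omega) ?_ (fun k hk => ?_) ?_
  · rw [splice_of_lt (by omega), splice_of_le (Nat.zero_le _), Nat.sub_add_cancel (by omega),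
      hclosed]
  · refine rel_splice (fun _ => hstep k (by omega)) (fun _ => ?_) (fun _ => hstep _ (by omega))
    rw [hρ, show i + (j - i) = j by omega]
    exact hstep j hjn
  · rwa [splice_of_le (Nat.zero_le _), splice_of_le hi]

theorem not_dir_of_reflTransGen {u v : V} (h : Relation.ReflTransGen G.PDEdge v u) :
    ¬ G.dir u v := by
  obtain ⟨n, σ, h0, hn, hstep⟩ := exists_seq_of_reflTransGen h
  intro huv
  refine G.not_dir_of_closed_walk (n + 1) (fun | 0 => u | k + 1 => σ k) n.succ_pos hn ?_
    (by simpa [h0] using huv)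
  rintro (_ | i) hi
  · exact Or.inl (by simpa [h0] using huv)
  · exact hstep i (by omega)

theorem reflTransGen_pdEdge_of_undir {u v : V} (h : Relation.ReflTransGen G.undir u v) :
    Relation.ReflTransGen G.PDEdge u v :=
  Relation.ReflTransGen.mono (fun _ _ => Or.inr) _ _ h

theorem not_dir_of_reflTransGen_undir {u v : V} (h : Relation.ReflTransGen G.undir v u) :
    ¬ G.dir u v :=
  G.not_dir_of_reflTransGen (G.reflTransGen_pdEdge_of_undir h)

/-- `a → ρ 1 − ⋯ − ρ n ← b` as in `IsMinimalComplex`, but neither induced nor required to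
have distinct vertices. -/
structure IsComplexWalk (a b : V) (n : ℕ) (ρ : ℕ → V) : Prop where
  zero : ρ 0 = a
  last : ρ (n + 1) = b
  dir_first : G.dir a (ρ 1)
  dir_last : G.dir b (ρ n)
  undir : ∀ i, 1 ≤ i → i < n → G.undir (ρ i) (ρ (i + 1))

namespace IsComplexWalk

variable {G} {a b : V} {n : ℕ} {ρ : ℕ → V}

theorem rev (h : G.IsComplexWalk a b n ρ) :
    G.IsComplexWalk b a n (fun k => ρ (n + 1 - k)) where
  zero := h.last
  last := by simpa using h.zero
  dir_first := by simpa using h.dir_last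
  dir_last := by simpa [Nat.add_sub_cancel_left] using h.dir_first
  undir i hi1 hin := by
    have := G.undir_symm _ _ (h.undir (n - i) (by omega) (by omega))
    rwa [show n - i + 1 = n + 1 - i by omega, show n - i = n + 1 - (i + 1) by omega] at this

theorem splice (h : G.IsComplexWalk a b n ρ) {i c : ℕ} (hc : i + c ≤ n)
    (hfirst : i = 0 → G.dir a (ρ (c + 1))) (hlast : i + c = n → G.dir b (ρ i))
    (hbridge : 1 ≤ i → i + c < n → G.undir (ρ i) (ρ (i + c + 1))) :
    G.IsComplexWalk a b (n - c) (LWF.splice ρ i c) where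
  zero := by rw [splice_of_le (Nat.zero_le _), h.zero]
  last := by rw [splice_of_lt (by omega), show n - c + 1 + c = n + 1 by omega, h.last]
  dir_first := by
    rcases Nat.eq_zero_or_pos i with rfl | hi
    · rw [splice_of_lt Nat.one_pos, Nat.add_comm]
      exact hfirst rfl
    · rw [splice_of_le hi]
      exact h.dir_first
  dir_last := by
    rcases eq_or_lt_of_le (show i ≤ n - c by omega) with hi | hi
    · rw [← hi, splice_of_le le_rfl]
      exact hlast (by omega)
    · rw [splice_of_lt hi, Nat.sub_add_cancel (by omega)]
      exact h.dir_last
  undir k hk1 hkn :=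
    rel_splice (fun _ => h.undir k hk1 (by omega)) (fun hk => hbridge (hk ▸ hk1) (by omega))
      (fun _ => h.undir (k + c) (by omega) (by omega))

theorem reflTransGen_undir (h : G.IsComplexWalk a b n ρ) {i j : ℕ} (hi : 1 ≤ i) (hij : i ≤ j)
    (hj : j ≤ n) : Relation.ReflTransGen G.undir (ρ i) (ρ j) := by
  induction j, hij using Nat.le_induction with
  | base => rfl
  | succ j hij ih => exact (ih (by omega)).tail (h.undir j (by omega) (by omega))

theorem ne_first (h : G.IsComplexWalk a b n ρ) {j : ℕ} (hj1 : 1 ≤ j) (hjn : j ≤ n) :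
    ρ j ≠ a := by
  intro hja
  refine G.not_dir_of_reflTransGen_undir ?_ h.dir_first
  simpa [hja] using h.reflTransGen_undir le_rfl hj1 hjn

theorem not_adj_first (h : G.IsComplexWalk a b n ρ)
    (hmin : ∀ m < n, ∀ σ, ¬ G.IsComplexWalk a b m σ) {j : ℕ} (hj2 : 2 ≤ j) (hjn : j ≤ n) :
    ¬ G.Adj a (ρ j) := by
  have hreach := h.reflTransGen_undir le_rfl (by omega) hjn
  rintro (hd | hd | hu)
  · exact hmin _ (by omega) _ (h.splice (i := 0) (c := j - 1) (by omega)
      (fun _ => by rwa [Nat.sub_add_cancel (by omega)]) (by omega) (by omega))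
  · exact G.not_dir_of_reflTransGen
      ((G.reflTransGen_pdEdge_of_undir hreach).tail (Or.inl hd)) h.dir_first
  · exact G.not_dir_of_reflTransGen
      ((G.reflTransGen_pdEdge_of_undir hreach).tail (Or.inr (G.undir_symm _ _ hu)))
      h.dir_first

theorem interior_ne (h : G.IsComplexWalk a b n ρ)
    (hmin : ∀ m < n, ∀ σ, ¬ G.IsComplexWalk a b m σ) {i j : ℕ} (hi : 1 ≤ i) (hij : i < j)
    (hjn : j ≤ n) : ρ i ≠ ρ j := by
  intro hρ
  refine hmin _ (by omega) _ (h.splice (i := i) (c := j - i) (by omega) (by omega)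
    (fun hj => ?_) (fun _ hj => ?_))
  · rw [hρ, show j = n by omega]
    exact h.dir_last
  · rw [hρ, show i + (j - i) = j by omega]
    exact h.undir j (by omega) (by omega)

theorem interior_not_adj (h : G.IsComplexWalk a b n ρ)
    (hmin : ∀ m < n, ∀ σ, ¬ G.IsComplexWalk a b m σ) {i j : ℕ} (hi : 1 ≤ i) (hij : i + 2 ≤ j)
    (hjn : j ≤ n) : ¬ G.Adj (ρ i) (ρ j) := by
  rintro (hd | hd | hu)
  · exact G.not_dir_of_reflTransGen_undir
      (G.reflTransGen_undir_symm (h.reflTransGen_undir hi (by omega) hjn)) hd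
  · exact G.not_dir_of_reflTransGen_undir (h.reflTransGen_undir hi (by omega) hjn) hd
  · refine hmin _ (by omega) _ (h.splice (i := i) (c := j - i - 1) (by omega) (by omega)
      (by omega) (fun _ _ => ?_))
    rwa [show i + (j - i - 1) + 1 = j by omega]

theorem rev_shortest (hmin : ∀ m < n, ∀ σ, ¬ G.IsComplexWalk a b m σ) :
    ∀ m < n, ∀ σ, ¬ G.IsComplexWalk b a m σ :=
  fun m hm _ hσ => hmin m hm _ hσ.rev

theorem isMinimalComplex (h : G.IsComplexWalk a b n ρ)
    (hmin : ∀ m < n, ∀ σ, ¬ G.IsComplexWalk a b m σ) (hab : ¬ G.Adj a b) (hne : a ≠ b) :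
    G.IsMinimalComplex a b n ρ := by
  have hn : 1 ≤ n := by
    by_contra hn
    obtain rfl : n = 0 := by omega
    exact hab (Or.inl (h.last ▸ h.dir_first))
  have key : ∀ i j, i < j → j ≤ n + 1 → ρ i ≠ ρ j ∧ (G.Adj (ρ i) (ρ j) → j = i + 1) := by
    intro i j hij hj
    rcases Nat.eq_zero_or_pos i with rfl | hi
    · rw [h.zero]
      rcases eq_or_lt_of_le hj with rfl | hj
      · rw [h.last]
        exact ⟨hne, fun hadj => absurd hadj hab⟩
      · refine ⟨(h.ne_first (by omega) (by omega)).symm, fun hadj => ?_⟩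
        by_contra
        exact h.not_adj_first hmin (by omega) (by omega) hadj
    rcases eq_or_lt_of_le hj with rfl | hj
    · have hρi : ρ i = ρ (n + 1 - (n + 1 - i)) := by rw [Nat.sub_sub_self (by omega)]
      rw [h.last, hρi]
      refine ⟨h.rev.ne_first (by omega) (by omega), fun hadj => ?_⟩
      by_contra
      exact h.rev.not_adj_first (rev_shortest hmin) (by omega) (by omega) (G.adj_symm hadj)
    · refine ⟨h.interior_ne hmin hi hij (by omega), fun hadj => ?_⟩
      by_contra
      exact h.interior_not_adj hmin hi (by omega) (by omega) hadj
  refine ⟨hn, h.zero, h.last, fun i j hi hj hij => ?_, h.dir_first, h.dir_last, h.undir,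
    fun i j hi hj hadj => ?_⟩
  · rcases lt_or_gt_of_ne hij with hlt | hlt
    · exact (key i j hlt hj).1
    · exact (key j i hlt hi).1.symm
  · rcases lt_trichotomy i j with hlt | rfl | hlt
    · exact Or.inl ((key i j hlt hj).2 hadj)
    · exact absurd hadj (G.adj_irrefl _)
    · exact Or.inr ((key j i hlt hi).2 (G.adj_symm hadj))

end IsComplexWalk

theorem mem_csp_of_isComplexWalk {a b : V} {n : ℕ} {ρ : ℕ → V} (h : G.IsComplexWalk a b n ρ)
    (hab : ¬ G.Adj a b) (hne : a ≠ b) : b ∈ G.csp a := by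
  classical
  have hex : ∃ n ρ, G.IsComplexWalk a b n ρ := ⟨n, ρ, h⟩
  obtain ⟨σ, hσ⟩ := Nat.find_spec hex
  exact ⟨_, σ, hσ.isMinimalComplex (fun m hm σ' hσ' => Nat.find_min hex hm ⟨σ', hσ'⟩) hab hne⟩

namespace Route

variable {G}

theorem exists_isSection (ω : Route G) {s : ℕ} (hs : s ≤ ω.len)
    (hcut : 0 < s → ¬ G.undir (ω.vtx (s - 1)) (ω.vtx s)) : ∃ e, ω.IsSection s e := by
  classical
  have hex : ∃ e, s ≤ e ∧ e ≤ ω.len ∧ (e < ω.len → ¬ G.undir (ω.vtx e) (ω.vtx (e + 1))) :=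
    ⟨ω.len, hs, le_rfl, fun h => absurd h (lt_irrefl _)⟩
  obtain ⟨hse, hel, hmax⟩ := Nat.find_spec hex
  refine ⟨Nat.find hex, hse, hel, fun k hsk hke => ?_, hcut, hmax⟩
  by_contra hu
  exact Nat.find_min hex hke ⟨hsk, by omega, fun _ => hu⟩

variable {ω : Route G}

theorem IsSection.le_of_start_le {a b a' b' : ℕ} (h : ω.IsSection a b)
    (h' : ω.IsSection a' b') (ha'b : a' ≤ b) : a' ≤ a ∧ b' ≤ b := by
  obtain ⟨-, -, hu, -, hr⟩ := h
  obtain ⟨-, hb', hu', hl', -⟩ := h'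
  constructor
  · by_contra ha
    have hu := hu (a' - 1) (by omega) (by omega)
    rw [Nat.sub_add_cancel (by omega)] at hu
    exact hl' (by omega) hu
  · by_contra hb
    exact hr (by omega) (hu' b ha'b (by omega))

theorem IsSection.eq_of_mem {a b a' b' k : ℕ} (h : ω.IsSection a b) (h' : ω.IsSection a' b')
    (hk : a ≤ k ∧ k ≤ b) (hk' : a' ≤ k ∧ k ≤ b') : a = a' ∧ b = b' := by
  have h₁ := h.le_of_start_le h' (by omega)
  have h₂ := h'.le_of_start_le h (by omega)
  omega

theorem IsColliderSection.isComplexWalk {a b : ℕ} (h : ω.IsColliderSection a b) :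
    G.IsComplexWalk (ω.vtx (a - 1)) (ω.vtx (b + 1)) (b - a + 1)
      (fun k => ω.vtx (a - 1 + k)) := by
  obtain ⟨⟨hab, -, hu, -, -⟩, ha, -, hdl, hdr⟩ := h
  refine ⟨rfl, ?_, ?_, ?_, fun i hi1 hin => ?_⟩
  · rw [show a - 1 + (b - a + 1 + 1) = b + 1 by omega]
  · rwa [Nat.sub_add_cancel ha]
  · rwa [show a - 1 + (b - a + 1) = b by omega]
  · rw [← Nat.add_assoc]
    exact hu _ (by omega) (by omega)

def rev (ω : Route G) : Route G where
  len := ω.len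
  vtx i := ω.vtx (ω.len - i)
  link i hi := by
    have h := G.adj_symm (ω.link (ω.len - (i + 1)) (by omega))
    rwa [show ω.len - (i + 1) + 1 = ω.len - i by omega] at h

@[simp] theorem rev_len : ω.rev.len = ω.len := rfl

@[simp] theorem rev_vtx (i : ℕ) : ω.rev.vtx i = ω.vtx (ω.len - i) := rfl

theorem IsSection.of_rev {a b : ℕ} (h : ω.rev.IsSection a b) :
    ω.IsSection (ω.len - b) (ω.len - a) := by
  obtain ⟨hab, hb, hu, hl, hr⟩ := h
  simp only [rev_len, rev_vtx] at hb hu hl hr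
  refine ⟨by omega, by omega, fun k hk1 hk2 => ?_, fun h0 hc => ?_, fun h0 hc => ?_⟩
  · have := hu (ω.len - (k + 1)) (by omega) (by omega)
    rw [show ω.len - (ω.len - (k + 1)) = k + 1 by omega,
      show ω.len - (ω.len - (k + 1) + 1) = k by omega] at this
    exact G.undir_symm _ _ this
  · refine hr (by omega) (G.undir_symm _ _ ?_)
    rwa [show ω.len - (b + 1) = ω.len - b - 1 by omega]
  · refine hl (by omega) (G.undir_symm _ _ ?_)
    rwa [show ω.len - (a - 1) = ω.len - a + 1 by omega]

theorem isColliderSection_rev_iff {a b : ℕ} (h : ω.rev.IsSection a b) :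
    ω.rev.IsColliderSection a b ↔ ω.IsColliderSection (ω.len - b) (ω.len - a) := by
  have hab := h.1
  have hb : b ≤ ω.len := h.2.1
  constructor
  · rintro ⟨-, ha, hbl, hdl, hdr⟩
    simp only [rev_len, rev_vtx] at hbl hdl hdr
    refine ⟨h.of_rev, by omega, by omega, ?_, ?_⟩
    · rwa [show ω.len - b - 1 = ω.len - (b + 1) by omega]
    · rwa [show ω.len - a + 1 = ω.len - (a - 1) by omega]
  · rintro ⟨-, hbl, ha, hdl, hdr⟩
    refine ⟨h, by omega, by simp only [rev_len]; omega, ?_, ?_⟩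
    · rwa [rev_vtx, rev_vtx, show ω.len - (a - 1) = ω.len - a + 1 by omega]
    · rwa [rev_vtx, rev_vtx, show ω.len - (b + 1) = ω.len - b - 1 by omega]

theorem Active.rev {Z : Set V} (hA : ω.Active Z) : ω.rev.Active Z := by
  refine ⟨fun a b hc => ?_, fun a b hsec hnc k hak hkb => ?_⟩
  · have hab := hc.1.1
    have hb : b ≤ ω.len := hc.1.2.1
    obtain ⟨k, hk1, hk2, hk⟩ := hA.1 _ _ ((isColliderSection_rev_iff hc.1).1 hc)
    refine ⟨ω.len - k, by omega, by omega, ?_⟩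
    rwa [rev_vtx, Nat.sub_sub_self (by omega)]
  · have hb : b ≤ ω.len := hsec.2.1
    exact hA.2 _ _ hsec.of_rev (mt (isColliderSection_rev_iff hsec).2 hnc) (ω.len - k)
      (by omega) (by omega)

theorem Active.exists_isSection_notMem {Z : Set V} (hA : ω.Active Z) {s : ℕ} (hs : s ≤ ω.len)
    (hin : 0 < s → G.dir (ω.vtx s) (ω.vtx (s - 1))) :
    ∃ e, ω.IsSection s e ∧ ∀ k, s ≤ k → k ≤ e → ω.vtx k ∉ Z := by
  obtain ⟨e, he⟩ := ω.exists_isSection hs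
    fun hs0 hu => G.dir_not_undir _ _ (hin hs0) (G.undir_symm _ _ hu)
  exact ⟨e, he, hA.2 s e he fun hc => G.dir_asymm _ _ hc.2.2.2.1 (hin hc.2.1)⟩

theorem Active.vtx_len_mem {T : V} (hA : ω.Active (G.mb T)) {s : ℕ} (hs : s ≤ ω.len)
    (hsT : ω.vtx s = T) (hin : 0 < s → G.dir (ω.vtx s) (ω.vtx (s - 1))) :
    ω.vtx ω.len ∈ ({T} : Set V) ∪ G.mb T := by
  induction hd : ω.len - s using Nat.strong_induction_on generalizing s with
  | _ d ih =>
  subst hd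
  rcases eq_or_lt_of_le hs with rfl | hs
  · exact Or.inl hsT
  have hmb : ∀ {u}, G.Adj T u → u ∈ G.mb T := fun h => G.mem_mb_iff.2 (Or.inl h)
  obtain ⟨e, hsec, hfree⟩ := hA.exists_isSection_notMem hs.le hin
  rcases ω.link s hs with hch | hpa | hnb
  · obtain ⟨b, hsec'⟩ := ω.exists_isSection (s := s + 1) hs
      fun _ hu => G.dir_not_undir _ _ hch hu
    have hcol : ω.IsColliderSection (s + 1) b := by
      by_contra hnc
      exact hA.2 _ _ hsec' hnc (s + 1) le_rfl hsec'.1 (hmb (Or.inl (hsT ▸ hch)))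
    obtain ⟨-, -, hb, -, hdr⟩ := id hcol
    obtain ⟨_, hsecy, hy⟩ := hA.exists_isSection_notMem (s := b + 1) hb fun _ => hdr
    by_cases hyT : ω.vtx (b + 1) = T
    · exact ih _ (by have := hsec'.1; omega) hb hyT (fun _ => hdr) rfl
    refine absurd ?_ (hy (b + 1) le_rfl hsecy.1)
    by_cases hadj : G.Adj T (ω.vtx (b + 1))
    · exact hmb hadj
    have hw := hcol.isComplexWalk
    rw [Nat.add_sub_cancel, hsT] at hw
    exact G.mem_mb_iff.2 (Or.inr (G.mem_csp_of_isComplexWalk hw hadj (Ne.symm hyT)))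
  · obtain ⟨_, hsecx, hx⟩ := hA.exists_isSection_notMem (s := s + 1) hs fun _ => hpa
    exact (hx (s + 1) le_rfl hsecx.1 (hmb (Or.inr (Or.inl (hsT ▸ hpa))))).elim
  · have hes : s + 1 ≤ e := by
      by_contra
      exact hsec.2.2.2.2 (by omega) (by rwa [show e = s by have := hsec.1; omega])
    exact absurd (hmb (Or.inr (Or.inr (hsT ▸ hnb)))) (hfree (s + 1) (by omega) hes)

def edge {u v : V} (h : G.Adj u v) : Route G where
  len := 1
  vtx k := if k = 0 then u else v
  link i hi := by
    obtain rfl : i = 0 := by omega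
    simpa using h

theorem edge_active {u v : V} (h : G.Adj u v) {Z : Set V} (hu : u ∉ Z) (hv : v ∉ Z) :
    (edge h).Active Z := by
  refine ⟨fun a b hc => ?_, fun a b _ _ k _ _ => ?_⟩
  · have := hc.1.1
    have := hc.2.1
    have : b < 1 := hc.2.2.1
    omega
  · dsimp only [edge]
    split_ifs
    exacts [hu, hv]

end Route

variable {G}

def IsMinimalComplex.route {a b : V} {n : ℕ} {ρ : ℕ → V} (h : G.IsMinimalComplex a b n ρ) :
    Route G where
  len := n + 1
  vtx := ρ
  link i hi := by
    obtain ⟨-, h0, hn, -, hfirst, hlast, hu, -⟩ := h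
    rcases Nat.eq_zero_or_pos i with rfl | hi0
    · exact Or.inl (h0 ▸ hfirst)
    rcases eq_or_lt_of_le (Nat.le_of_lt_succ hi) with rfl | hin
    · exact Or.inr (Or.inl (hn ▸ hlast))
    · exact Or.inr (Or.inr (hu i hi0 hin))

theorem IsMinimalComplex.isColliderSection_route {a b : V} {n : ℕ} {ρ : ℕ → V}
    (h : G.IsMinimalComplex a b n ρ) : h.route.IsColliderSection 1 n := by
  obtain ⟨hn1, h0, hn, -, hfirst, hlast, hu, -⟩ := h
  refine ⟨⟨hn1, Nat.le_succ n, hu, fun _ hc => ?_, fun _ hc => ?_⟩, Nat.one_pos,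
    Nat.lt_succ_self n, h0 ▸ hfirst, hn ▸ hlast⟩
  · exact G.dir_not_undir _ _ hfirst (h0 ▸ hc)
  · exact G.dir_not_undir _ _ hlast (G.undir_symm _ _ (hn ▸ hc))

theorem IsMinimalComplex.route_active {a b : V} {n : ℕ} {ρ : ℕ → V}
    (h : G.IsMinimalComplex a b n ρ) {Z : Set V} (ha : a ∉ Z) (hb : b ∉ Z) (h1 : ρ 1 ∈ Z) :
    h.route.Active Z := by
  have hcol := h.isColliderSection_route
  have h0 := h.2.1
  have hn := h.2.2.1
  -- every vertex other than `a` and `b` lies on the collider section `1, …, n`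
  refine ⟨fun i j hc => ⟨1, ?_⟩, fun i j hsec hnc k hik hkj hk => ?_⟩
  · have := hc.1.1
    have := hc.2.1
    have : j < n + 1 := hc.2.2.1
    have := (hc.1.eq_of_mem hcol.1 (k := i) ⟨le_rfl, hc.1.1⟩ ⟨by omega, by omega⟩).1
    exact ⟨by omega, by omega, Or.inl h1⟩
  · have : j ≤ n + 1 := hsec.2.1
    have : k ≤ n + 1 := hkj.trans this
    rcases Nat.eq_zero_or_pos k with rfl | hk0
    · exact ha (h0 ▸ hk)
    rcases eq_or_lt_of_le (show k ≤ n + 1 by omega) with rfl | hkn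
    · exact hb (hn ▸ hk)
    obtain ⟨rfl, rfl⟩ := hcol.1.eq_of_mem hsec ⟨hk0, by omega⟩ ⟨hik, hkj⟩
    exact hnc hcol

theorem CSep.mem_of_active {T m : V} {S : Set V} (hsep : G.CSep {T} (Set.univ \ ({T} ∪ S)) S)
    {ω : Route G} (h0 : ω.vtx 0 = T) (hlen : ω.vtx ω.len = m) (hmT : m ≠ T) (hA : ω.Active S) :
    m ∈ S := by
  by_contra hm
  refine hsep ω (Or.inl ⟨h0, trivial, ?_⟩) hA
  rintro (h | h)
  exacts [hmT (hlen ▸ h), hm (hlen ▸ h)]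

theorem CSep.mem_of_adj {T m : V} {S : Set V} (hsep : G.CSep {T} (Set.univ \ ({T} ∪ S)) S)
    (hT : T ∉ S) (h : G.Adj T m) : m ∈ S := by
  have hmT : m ≠ T := by
    rintro rfl
    exact G.adj_irrefl _ h
  by_contra hm
  exact hm (hsep.mem_of_active rfl rfl hmT (Route.edge_active h hT hm))

theorem CSep.mem_of_mem_csp {T m : V} {S : Set V} (hsep : G.CSep {T} (Set.univ \ ({T} ∪ S)) S)
    (hT : T ∉ S) (h : m ∈ G.csp T) : m ∈ S := by
  obtain ⟨n, ρ, hc⟩ := h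
  obtain ⟨-, h0, hn, hinj, hfirst, -⟩ := id hc
  have hmT : m ≠ T := by
    rw [← h0, ← hn]
    exact hinj _ _ le_rfl (Nat.zero_le _) (by omega)
  by_contra hm
  exact hm (hsep.mem_of_active h0 hn hmT
    (hc.route_active hT hm (hsep.mem_of_adj hT (Or.inl hfirst))))

variable (G)

theorem self_notMem_mb (T : V) : T ∉ G.mb T := by
  rintro (((h | h) | h) | ⟨n, ρ, -, h0, hn, hinj, -⟩)
  · exact G.dir_irrefl T h
  · exact G.undir_irrefl T h
  · exact G.dir_irrefl T h
  · exact hinj 0 (n + 1) (Nat.zero_le _) le_rfl (by omega) (h0.trans hn.symm)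

theorem csep_mb (T : V) : G.CSep {T} (Set.univ \ ({T} ∪ G.mb T)) (G.mb T) := by
  rintro ω (⟨h0, -, hlen⟩ | ⟨⟨-, hlen⟩, h0⟩) hA
  · exact hlen (hA.vtx_len_mem (Nat.zero_le _) h0 (absurd · (lt_irrefl 0)))
  · refine hlen ?_
    simpa using hA.rev.vtx_len_mem (Nat.zero_le _) (by simpa using h0) (absurd · (lt_irrefl 0))

end ChainGraph

theorem mb_unique_minimal_separator_general {V : Type*} (G : ChainGraph V) (T : V) :
    T ∉ G.mb T ∧
    G.CSep {T} (Set.univ \ ({T} ∪ G.mb T)) (G.mb T) ∧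
    (∀ S : Set V, T ∉ S → G.CSep {T} (Set.univ \ ({T} ∪ S)) S → G.mb T ⊆ S) := by
  refine ⟨G.self_notMem_mb T, G.csep_mb T, fun S hT hsep m hm => ?_⟩
  rcases G.mem_mb_iff.1 hm with hadj | hcsp
  · exact hsep.mem_of_adj hT hadj
  · exact hsep.mem_of_mem_csp hT hcsp

/-- `Mb(T)` is the unique inclusion-minimal set `S ⊆ V ∖ {T}`
such that `T` is c-separated from every vertex of `V ∖ ({T} ∪ S)` given `S`:
`Mb(T)` itself has this separating property (and avoids `T`), and every
`S ⊆ V ∖ {T}` with this property satisfies `Mb(T) ⊆ S`. -/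
theorem mb_unique_minimal_separator {V : Type*} [Fintype V] (G : ChainGraph V) (T : V) :
    T ∉ G.mb T ∧
    G.CSep {T} (Set.univ \ ({T} ∪ G.mb T)) (G.mb T) ∧
    (∀ S : Set V, T ∉ S → G.CSep {T} (Set.univ \ ({T} ∪ S)) S → G.mb T ⊆ S) :=
  mb_unique_minimal_separator_general G T

end LWF
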